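/- arXiv:1601.06106 — 2 statements merged into one kernel-verified Lean document; each statement's English description precedes it below -/
import Mathlib

section
/- Let E be a real normed vector space and Δ ⊆ E a convex compact subset. For each natural number N, fix an integer p_N ≥ 1, points τ_{1,N}, …, τ_{p_N,N} ∈ Δ, and weights α_{1,N}, …, α_{p_N,N} ∈ [0,1] with Σ_{i=1}^{p_N} α_{i,N} = 1, and let B_N := Σ_{i=1}^{p_N} α_{i,N}·τ_{i,N}. Let τ ∈ Δ be an extreme point of Δ, and suppose B_N → τ as N → ∞. Then for every ε > 0, the total weight of points outside the ε-ball around τ vanishes: Σ_{i : ‖τ_{i,N} − τ‖ ≥ ε} α_{i,N} → 0 as N → ∞. -/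
/-!
Cover the points of `Δ` at distance at least `ε` from `τ` by finitely many closed balls of
radius `ε / 2`, none of which contains `τ`; it suffices that the weight carried by each such
closed convex set `C` tends to `0`. If that weight is at least `c > 0`, the barycenter splits as
`t • x + (1 - t) • y` with `t ∈ [c, 1]`, `x ∈ C ∩ Δ` and `y ∈ Δ`. These combinations form a
compact set, and extremality of `τ` keeps `τ` out of it, so the barycenters eventually leave it.
-/

open Filter Topology Set Finset

theorem Finset.sum_filter_le_sum_sum_filter {ι κ M : Type*} [AddCommMonoid M] [PartialOrder M]
    [IsOrderedAddMonoid M] (s : Finset ι) (F : Finset κ) (p : ι → Prop) (q : κ → ι → Prop)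
    [DecidablePred p] [∀ j, DecidablePred (q j)] (f : ι → M) (hf : ∀ i ∈ s, 0 ≤ f i)
    (hcover : ∀ i ∈ s, p i → ∃ j ∈ F, q j i) :
    ∑ i ∈ s with p i, f i ≤ ∑ j ∈ F, ∑ i ∈ s with q j i, f i :=
  calc ∑ i ∈ s with p i, f i ≤ ∑ i ∈ s with p i, ∑ j ∈ F with q j i, f i :=
        sum_le_sum fun i hi => by
          obtain ⟨his, hpi⟩ := mem_filter.1 hi
          obtain ⟨j, hj, hqj⟩ := hcover i his hpi
          exact single_le_sum (f := fun _ => f i) (fun _ _ => hf i his) (mem_filter.2 ⟨hj, hqj⟩)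
    _ ≤ ∑ i ∈ s, ∑ j ∈ F with q j i, f i :=
        sum_le_sum_of_subset_of_nonneg (filter_subset _ _) fun i hi _ =>
          sum_nonneg fun _ _ => hf i hi
    _ = ∑ j ∈ F, ∑ i ∈ s with q j i, f i := by
        simp only [sum_filter]
        exact sum_comm

theorem smul_add_one_sub_smul_ne_of_extreme {𝕜 E : Type*} [Ring 𝕜] [PartialOrder 𝕜]
    [AddCommGroup E] [Module 𝕜 E] {Δ : Set E} {τ : E}
    (hext : ∀ x ∈ Δ, ∀ y ∈ Δ, ∀ t : 𝕜, 0 < t → t < 1 →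
      τ = t • x + (1 - t) • y → x = τ ∧ y = τ)
    {x y : E} (hx : x ∈ Δ) (hxτ : x ≠ τ) (hy : y ∈ Δ) {t : 𝕜} (ht₀ : 0 < t) (ht₁ : t ≤ 1) :
    t • x + (1 - t) • y ≠ τ := by
  intro h
  rcases ht₁.lt_or_eq with ht₁ | rfl
  · exact hxτ (hext x hx y hy t ht₀ ht₁ h.symm).1
  · exact hxτ (by simpa using h)

section Convex

variable {𝕜 E : Type*} [Field 𝕜] [AddCommGroup E] [Module 𝕜 E]

theorem Finset.sum_smul_centerMass {ι : Type*} (s : Finset ι) (w : ι → 𝕜) (z : ι → E)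
    (hw : ∑ i ∈ s, w i ≠ 0) : (∑ i ∈ s, w i) • s.centerMass w z = ∑ i ∈ s, w i • z i :=
  smul_inv_smul₀ hw _

variable [LinearOrder 𝕜] [IsStrictOrderedRing 𝕜]

theorem exists_sum_smul_eq_smul_add_smul {ι : Type*} {C D : Set E} (hC : Convex 𝕜 C)
    (hD : Convex 𝕜 D) (s : Finset ι) (p : ι → Prop) [DecidablePred p] (a : ι → 𝕜)
    (z : ι → E) (ha : ∀ i ∈ s, 0 ≤ a i) (hsum : ∑ i ∈ s, a i = 1) (hzD : ∀ i ∈ s, z i ∈ D)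
    (hzC : ∀ i ∈ s, p i → z i ∈ C) (hpos : 0 < ∑ i ∈ s with p i, a i) :
    ∃ x ∈ C, ∃ y ∈ D, ∑ i ∈ s, a i • z i =
      (∑ i ∈ s with p i, a i) • x + (1 - ∑ i ∈ s with p i, a i) • y := by
  have ha' : ∀ q : ι → Prop, [DecidablePred q] → ∀ i ∈ s.filter q, 0 ≤ a i :=
    fun q _ i hi => ha i (mem_filter.1 hi).1
  have hzD' : ∀ q : ι → Prop, [DecidablePred q] → ∀ i ∈ s.filter q, z i ∈ D :=
    fun q _ i hi => hzD i (mem_filter.1 hi).1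
  have hxC : {i ∈ s | p i}.centerMass a z ∈ C := hC.centerMass_mem (ha' p) hpos
    fun i hi => hzC i (mem_filter.1 hi).1 (mem_filter.1 hi).2
  have hrest : ∑ i ∈ s with ¬p i, a i = 1 - ∑ i ∈ s with p i, a i := by
    rw [← hsum, ← sum_filter_add_sum_filter_not s p, add_sub_cancel_left]
  rw [← sum_filter_add_sum_filter_not s p, ← hrest, ← sum_smul_centerMass _ _ _ hpos.ne']
  rcases (sum_nonneg (ha' fun i => ¬p i)).eq_or_lt with h | h
  · have hzero : ∑ i ∈ s with ¬p i, a i • z i = 0 := sum_eq_zero fun i hi => by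
      rw [(sum_eq_zero_iff_of_nonneg (ha' _)).1 h.symm i hi, zero_smul]
    exact ⟨_, hxC, _, hD.centerMass_mem (ha' p) hpos (hzD' p), by rw [hzero, ← h]; simp⟩
  · exact ⟨_, hxC, _, hD.centerMass_mem (ha' _) h (hzD' _), by
      rw [sum_smul_centerMass _ _ _ h.ne']⟩

end Convex

open Classical in
theorem tendsto_sum_weight_mem_zero_of_extreme {E β : Type*} [AddCommGroup E] [Module ℝ E]
    [TopologicalSpace E] [ContinuousAdd E] [ContinuousSMul ℝ E] [T2Space E] {l : Filter β} {ι : β → Type*} [∀ b, Fintype (ι b)] {Δ C : Set E}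
    (hΔ : Convex ℝ Δ) (hΔc : IsCompact Δ) (hC : Convex ℝ C) (hCc : IsClosed C) {τ : E}
    (hτC : τ ∉ C)
    (hext : ∀ x ∈ Δ, ∀ y ∈ Δ, ∀ t : ℝ, 0 < t → t < 1 →
      τ = t • x + (1 - t) • y → x = τ ∧ y = τ)
    (z : ∀ b, ι b → E) (hz : ∀ b i, z b i ∈ Δ) (a : ∀ b, ι b → ℝ) (ha : ∀ b i, 0 ≤ a b i)
    (hsum : ∀ b, ∑ i, a b i = 1) (hB : Tendsto (fun b => ∑ i, a b i • z b i) l (𝓝 τ)) :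
    Tendsto (fun b => ∑ i with z b i ∈ C, a b i) l (𝓝 0) := by
  refine tendsto_order.2 ⟨fun c hc => .of_forall fun b => hc.trans_le
    (sum_nonneg fun i _ => ha b i), fun c hc => ?_⟩
  -- the barycenters that put weight at least `c` on `C` form a compact set avoiding `τ`
  set T := (fun q : ℝ × E × E => q.1 • q.2.1 + (1 - q.1) • q.2.2) ''
    (Icc c 1 ×ˢ (C ∩ Δ) ×ˢ Δ)
  have hT : IsClosed T :=
    ((isCompact_Icc.prod ((hΔc.inter_left hCc).prod hΔc)).image (by fun_prop)).isClosed
  have hτT : τ ∉ T := by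
    rintro ⟨⟨t, x, y⟩, ⟨ht, ⟨hxC, hxΔ⟩, hy⟩, h⟩
    exact smul_add_one_sub_smul_ne_of_extreme hext hxΔ (ne_of_mem_of_not_mem hxC hτC) hy
      (hc.trans_le ht.1) ht.2 h
  filter_upwards [hB.eventually (hT.isOpen_compl.mem_nhds hτT)] with b hb
  by_contra! hcw
  obtain ⟨x, hx, y, hy, heq⟩ := exists_sum_smul_eq_smul_add_smul (hC.inter hΔ) hΔ univ _ (a b)
    (z b) (fun i _ => ha b i) (hsum b) (fun i _ => hz b i) (fun i _ hi => ⟨hi, hz b i⟩)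
    (hc.trans_le hcw)
  refine hb ⟨(_, x, y), ⟨⟨hcw, ?_⟩, hx, hy⟩, heq.symm⟩
  exact (sum_le_sum_of_subset_of_nonneg (filter_subset _ _) fun i _ _ => ha b i).trans_eq (hsum b)

theorem weight_outside_ball_tendsto_zero_general
    {E : Type*} [NormedAddCommGroup E] [NormedSpace ℝ E]
    (Δ : Set E) (hConv : Convex ℝ Δ) (hComp : IsCompact Δ)
    (p : ℕ → ℕ)
    (τpt : ∀ N : ℕ, Fin (p N) → E) (hτpt : ∀ N i, τpt N i ∈ Δ)
    (α : ∀ N : ℕ, Fin (p N) → ℝ)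
    (hα : ∀ N i, α N i ∈ Set.Icc (0 : ℝ) 1)
    (hsum : ∀ N, ∑ i, α N i = 1)
    (τ : E)
    (hext : ∀ x ∈ Δ, ∀ y ∈ Δ, ∀ t : ℝ, 0 < t → t < 1 →
      τ = t • x + (1 - t) • y → x = τ ∧ y = τ)
    (hB : Tendsto (fun N => ∑ i, α N i • τpt N i) atTop (𝓝 τ)) :
    ∀ ε : ℝ, 0 < ε →
      Tendsto (fun N => ∑ i ∈ Finset.univ.filter (fun i => ε ≤ ‖τpt N i - τ‖), α N i)
        atTop (𝓝 0) := by
  classical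
  intro ε hε
  have hfar : IsCompact (Δ ∩ {z | ε ≤ ‖z - τ‖}) :=
    hComp.inter_right (isClosed_le continuous_const (by fun_prop))
  obtain ⟨F, hFfar, hcover⟩ := hfar.elim_nhds_subcover (fun z => Metric.closedBall z (ε / 2))
    fun z _ => Metric.closedBall_mem_nhds z (half_pos hε)
  have hpiece : ∀ z ∈ F, Tendsto
      (fun N => ∑ i with τpt N i ∈ Metric.closedBall z (ε / 2), α N i) atTop (𝓝 0) := by
    intro z hz
    refine tendsto_sum_weight_mem_zero_of_extreme hConv hComp (convex_closedBall z _)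
      Metric.isClosed_closedBall (fun hτ => ?_) hext τpt hτpt α (fun N i => (hα N i).1) hsum hB
    have hzτ : ε ≤ ‖z - τ‖ := (hFfar z hz).2
    rw [Metric.mem_closedBall, dist_eq_norm, norm_sub_rev] at hτ
    linarith
  refine squeeze_zero (fun N => sum_nonneg fun i _ => (hα N i).1)
    (fun N => sum_filter_le_sum_sum_filter _ F _ _ _ (fun i _ => (hα N i).1)
      fun i _ hi => ?_) (by simpa using tendsto_finsetSum F hpiece)
  simpa using hcover ⟨hτpt N i, hi⟩

/-- If the barycenters of weighted points in a convex compact subset of a normed space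
converge to an extreme point, then for every `ε > 0` the total weight of the points
lying outside the `ε`-ball around the extreme point tends to `0`. -/
theorem weight_outside_ball_tendsto_zero
    {E : Type*} [NormedAddCommGroup E] [NormedSpace ℝ E]
    (Δ : Set E) (hConv : Convex ℝ Δ) (hComp : IsCompact Δ)
    (p : ℕ → ℕ) (hp : ∀ N, 1 ≤ p N)
    (τpt : ∀ N : ℕ, Fin (p N) → E) (hτpt : ∀ N i, τpt N i ∈ Δ)
    (α : ∀ N : ℕ, Fin (p N) → ℝ)
    (hα : ∀ N i, α N i ∈ Set.Icc (0 : ℝ) 1)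
    (hsum : ∀ N, ∑ i, α N i = 1)
    (τ : E) (hτ : τ ∈ Δ)
    (hext : ∀ x ∈ Δ, ∀ y ∈ Δ, ∀ t : ℝ, 0 < t → t < 1 →
      τ = t • x + (1 - t) • y → x = τ ∧ y = τ)
    (hB : Tendsto (fun N => ∑ i, α N i • τpt N i) atTop (𝓝 τ)) :
    ∀ ε : ℝ, 0 < ε →
      Tendsto (fun N => ∑ i ∈ Finset.univ.filter (fun i => ε ≤ ‖τpt N i - τ‖), α N i)
        atTop (𝓝 0) :=
  weight_outside_ball_tendsto_zero_general Δ hConv hComp p τpt hτpt α hα hsum τ hext hB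
end

section
/- Let E be a real normed vector space and Δ ⊆ E a convex compact subset. For each natural number N, fix an integer p_N ≥ 1, points τ_{1,N}, …, τ_{p_N,N} ∈ Δ, and weights α_{1,N}, …, α_{p_N,N} ∈ [0,1] with Σ_{i=1}^{p_N} α_{i,N} = 1, and let B_N := Σ_{i=1}^{p_N} α_{i,N}·τ_{i,N}. Let τ ∈ Δ be an extreme point of Δ with B_N → τ as N → ∞. If (j_N) is a sequence of indices j_N ∈ {1,…,p_N} for which there exists ε > 0 with ‖τ_{j_N,N} − τ‖ ≥ ε for all N, then α_{j_N,N} → 0 as N → ∞. -/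
open Filter Topology

/-- Corollary of the geometric proposition: if the barycenters converge to an extreme
point and a sequence of chosen points stays at distance at least `ε` from the extreme
point, then the corresponding weights tend to `0`. -/
theorem weight_of_exceptional_sequence_tendsto_zero
    {E : Type*} [NormedAddCommGroup E] [NormedSpace ℝ E]
    (Δ : Set E) (hConv : Convex ℝ Δ) (hComp : IsCompact Δ)
    (p : ℕ → ℕ) (hp : ∀ N, 1 ≤ p N)
    (τpt : ∀ N : ℕ, Fin (p N) → E) (hτpt : ∀ N i, τpt N i ∈ Δ)
    (α : ∀ N : ℕ, Fin (p N) → ℝ)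
    (hα : ∀ N i, α N i ∈ Set.Icc (0 : ℝ) 1)
    (hsum : ∀ N, ∑ i, α N i = 1)
    (τ : E) (hτ : τ ∈ Δ)
    (hext : ∀ x ∈ Δ, ∀ y ∈ Δ, ∀ t : ℝ, 0 < t → t < 1 →
      τ = t • x + (1 - t) • y → x = τ ∧ y = τ)
    (hB : Tendsto (fun N => ∑ i, α N i • τpt N i) atTop (𝓝 τ))
    (j : ∀ N : ℕ, Fin (p N)) (ε : ℝ) (hε : 0 < ε)
    (hfar : ∀ N, ε ≤ ‖τpt N (j N) - τ‖) :
    Tendsto (fun N => α N (j N)) atTop (𝓝 0) := by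
  by_contra h
  obtain ⟨M, hM⟩ := hComp.isBounded.exists_norm_le
  have hsum_erase : ∀ N, ∑ i ∈ Finset.univ.erase (j N), α N i = 1 - α N (j N) := by
    intro N
    have h1 := Finset.sum_erase_add Finset.univ (α N) (Finset.mem_univ (j N))
    have h2 := hsum N
    linarith
  have hrest_eq : ∀ N, (∑ i, α N i • τpt N i) - α N (j N) • τpt N (j N)
      = ∑ i ∈ Finset.univ.erase (j N), α N i • τpt N i := by
    intro N
    have h1 := Finset.sum_erase_add Finset.univ (fun i => α N i • τpt N i)
      (Finset.mem_univ (j N))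
    rw [← h1]; abel
  have hrest_norm : ∀ N, ‖(∑ i, α N i • τpt N i) - α N (j N) • τpt N (j N)‖
      ≤ (1 - α N (j N)) * M := by
    intro N
    rw [hrest_eq N, ← hsum_erase N, Finset.sum_mul]
    refine (norm_sum_le _ _).trans (Finset.sum_le_sum fun i _ => ?_)
    rw [norm_smul, Real.norm_eq_abs, abs_of_nonneg (hα N i).1]
    exact mul_le_mul_of_nonneg_left (hM _ (hτpt N i)) (hα N i).1
  have hrest_mem : ∀ N, α N (j N) < 1 →
      (1 - α N (j N))⁻¹ • ((∑ i, α N i • τpt N i) - α N (j N) • τpt N (j N)) ∈ Δ := by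
    intro N h1
    have hs : (0:ℝ) < 1 - α N (j N) := by linarith
    rw [hrest_eq N, Finset.smul_sum]
    have key : ∀ i, (1 - α N (j N))⁻¹ • (α N i • τpt N i)
        = ((1 - α N (j N))⁻¹ * α N i) • τpt N i := by
      intro i; rw [smul_smul]
    simp_rw [key]
    refine hConv.sum_mem (fun i _ => mul_nonneg (by positivity) (hα N i).1) ?_
      (fun i _ => hτpt N i)
    rw [← Finset.mul_sum, hsum_erase N, inv_mul_cancel₀ hs.ne']
  -- extract a subsequence bounded away from 0
  obtain ⟨ε', hε', hfreq⟩ : ∃ ε' > 0, ∃ᶠ n in atTop, ε' ≤ α n (j n) := by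
    rw [Metric.tendsto_atTop] at h
    push_neg at h
    obtain ⟨ε', hε', hh⟩ := h
    refine ⟨ε', hε', Filter.frequently_atTop.mpr fun N => ?_⟩
    obtain ⟨n, hn, hdist⟩ := hh N
    refine ⟨n, hn, ?_⟩
    rw [Real.dist_eq, sub_zero, abs_of_nonneg (hα n (j n)).1] at hdist
    exact hdist
  obtain ⟨φ₁, hφ₁, hφ₁p⟩ := Filter.extraction_of_frequently_atTop hfreq
  obtain ⟨a, ha, φ₂, hφ₂, hαlim⟩ :=
    (isCompact_Icc (a := ε') (b := 1)).tendsto_subseq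
      (x := fun n => α (φ₁ n) (j (φ₁ n))) (fun n => ⟨hφ₁p n, (hα _ _).2⟩)
  obtain ⟨x, hx, φ₃, hφ₃, hxlim⟩ :=
    hComp.tendsto_subseq (x := fun n => τpt (φ₁ (φ₂ n)) (j (φ₁ (φ₂ n))))
      (fun n => hτpt _ _)
  set ψ : ℕ → ℕ := fun n => φ₁ (φ₂ (φ₃ n)) with hψdef
  have hψ : StrictMono ψ := (hφ₁.comp hφ₂).comp hφ₃
  have hαψ : Tendsto (fun n => α (ψ n) (j (ψ n))) atTop (𝓝 a) :=
    hαlim.comp hφ₃.tendsto_atTop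
  have hxψ : Tendsto (fun n => τpt (ψ n) (j (ψ n))) atTop (𝓝 x) := hxlim
  have hBψ : Tendsto (fun n => ∑ i, α (ψ n) i • τpt (ψ n) i) atTop (𝓝 τ) :=
    hB.comp hψ.tendsto_atTop
  have ha0 : 0 < a := lt_of_lt_of_le hε' ha.1
  have ha1 : a ≤ 1 := ha.2
  have hrψ : Tendsto
      (fun n => (∑ i, α (ψ n) i • τpt (ψ n) i) - α (ψ n) (j (ψ n)) • τpt (ψ n) (j (ψ n)))
      atTop (𝓝 (τ - a • x)) := hBψ.sub (hαψ.smul hxψ)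
  have hxτ : ε ≤ ‖x - τ‖ := by
    refine ge_of_tendsto' ((hxψ.sub tendsto_const_nhds).norm) (fun n => hfar (ψ n))
  rcases eq_or_lt_of_le ha1 with haeq | halt
  · -- a = 1 : the rest mass vanishes, so τ = x, contradiction
    subst haeq
    have hzero : Tendsto (fun n => (1 - α (ψ n) (j (ψ n))) * M) atTop (𝓝 0) := by
      have := ((tendsto_const_nhds (x := (1:ℝ))).sub hαψ).mul
        (tendsto_const_nhds (x := M))
      simpa using this
    have hnorm0 : Tendsto
        (fun n => ‖(∑ i, α (ψ n) i • τpt (ψ n) i)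
          - α (ψ n) (j (ψ n)) • τpt (ψ n) (j (ψ n))‖) atTop (𝓝 0) :=
      squeeze_zero (fun n => norm_nonneg _) (fun n => hrest_norm (ψ n)) hzero
    have heq0 : ‖τ - (1:ℝ) • x‖ = 0 := tendsto_nhds_unique hrψ.norm hnorm0
    rw [norm_eq_zero, sub_eq_zero, one_smul] at heq0
    have : ‖x - τ‖ = 0 := by rw [← heq0, sub_self, norm_zero]
    linarith
  · -- a < 1 : build the complementary point y ∈ Δ
    have hane : (1 : ℝ) - a ≠ 0 := by linarith
    set y : E := (1 - a)⁻¹ • (τ - a • x) with hydef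
    have hev : ∀ᶠ n in atTop, α (ψ n) (j (ψ n)) < 1 :=
      hαψ.eventually_lt_const halt
    have hylim : Tendsto (fun n => (1 - α (ψ n) (j (ψ n)))⁻¹ •
        ((∑ i, α (ψ n) i • τpt (ψ n) i)
          - α (ψ n) (j (ψ n)) • τpt (ψ n) (j (ψ n)))) atTop (𝓝 y) := by
      exact (((tendsto_const_nhds (x := (1:ℝ))).sub hαψ).inv₀ hane).smul hrψ
    have hy : y ∈ Δ :=
      hComp.isClosed.mem_of_tendsto hylim (hev.mono fun n hn => hrest_mem (ψ n) hn)
    have heq : τ = a • x + (1 - a) • y := by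
      rw [hydef, smul_inv_smul₀ hane]
      abel
    obtain ⟨hxτ', _⟩ := hext x hx y hy a ha0 halt heq
    rw [hxτ', sub_self, norm_zero] at hxτ
    linarith
end
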